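/- arXiv:2509.25053 — 2 statements merged into one kernel-verified Lean document; each statement's English description precedes it below -/
import Mathlib

section
/- For the scalar saturation dynamics ȧ = [1 - (a/a_max)^n]·u(t) - p₁·a with even exponent n ≥ 2, p₁ > 0, and any bounded measurable command u, the interval (-a_max, a_max) is forward invariant: if |a(0)| < a_max then |a(t)| < a_max for all t ≥ 0. -/
theorem saturation_invariance (a_max p₁ : ℝ) (ha : 0 < a_max) (hp : 0 < p₁)
    (n : ℕ) (hn_even : Even n) (hn2 : 2 ≤ n)
    (u : ℝ → ℝ) (hu : Continuous u) (hub : ∃ M, ∀ t, |u t| ≤ M)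
    (a : ℝ → ℝ)
    (hode : ∀ t ≥ (0:ℝ), HasDerivAt a ((1 - (a t / a_max)^n) * u t - p₁ * a t) t)
    (h0 : |a 0| < a_max) :
    ∀ t ≥ (0:ℝ), |a t| < a_max := by
  by_contra hcon
  push_neg at hcon
  obtain ⟨t₀, ht₀, ht₀'⟩ := hcon
  set S : Set ℝ := {t | 0 ≤ t ∧ a_max ≤ |a t|} with hSdef
  have hne : S.Nonempty := ⟨t₀, ht₀, ht₀'⟩
  have hbdd : BddBelow S := ⟨0, fun s hs => hs.1⟩
  set T := sInf S with hTdef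
  have hT0 : 0 ≤ T := le_csInf hne fun s hs => hs.1
  have hcontA : ∀ t ≥ (0:ℝ), ContinuousAt a t := fun t ht => (hode t ht).continuousAt
  -- a_max ≤ |a T|
  have hTmem : a_max ≤ |a T| := by
    by_contra hlt
    push_neg at hlt
    have hca : ContinuousAt (fun t => |a t|) T := (hcontA T hT0).abs
    have hev : ∀ᶠ s in nhds T, |a s| < a_max := hca.eventually_lt_const hlt
    obtain ⟨δ, hδ, hball⟩ := Metric.eventually_nhds_iff.mp hev
    obtain ⟨s, hsS, hs⟩ := (csInf_lt_iff hbdd hne).mp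
      (show sInf S < T + δ by rw [← hTdef]; linarith)
    have hTs : T ≤ s := csInf_le hbdd hsS
    have : |a s| < a_max := hball (by rw [Real.dist_eq]; rw [abs_of_nonneg (by linarith)]; linarith)
    exact absurd hsS.2 (not_le.mpr this)
  -- T > 0
  have hTpos : 0 < T := by
    rcases lt_or_eq_of_le hT0 with h | h
    · exact h
    · exfalso; rw [← h] at hTmem; linarith [h0]
  -- points in [0,T) are not in S
  have hnotS : ∀ t, 0 ≤ t → t < T → |a t| < a_max := by
    intro t h1 h2
    by_contra hge
    push_neg at hge
    exact absurd (csInf_le hbdd ⟨h1, hge⟩) (not_le.mpr h2)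
  -- |a T| ≤ a_max, hence = a_max
  have hevIoo : ∀ᶠ t in nhdsWithin T (Set.Iio T), t ∈ Set.Ioo 0 T :=
    Ioo_mem_nhdsLT_of_mem ⟨hTpos, le_refl T⟩
  have htend : Filter.Tendsto a (nhdsWithin T (Set.Iio T)) (nhds (a T)) :=
    ((hcontA T hT0).tendsto).mono_left nhdsWithin_le_nhds
  have hTle : |a T| ≤ a_max := by
    refine le_of_tendsto htend.abs ?_
    filter_upwards [hevIoo] with t ht
    exact le_of_lt (hnotS t ht.1.le ht.2)
  have habs : |a T| = a_max := le_antisymm hTle hTmem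
  -- derivative at T
  have hpow : (a T / a_max)^n = 1 := by
    have : |a T / a_max| = 1 := by
      rw [abs_div, habs, abs_of_pos ha, div_self (ne_of_gt ha)]
    calc (a T / a_max)^n = |a T / a_max|^n := (hn_even.pow_abs _).symm
      _ = 1 := by rw [this, one_pow]
  have hd : HasDerivAt a (-(p₁ * a T)) T := by
    have := hode T hT0
    rw [hpow] at this
    simpa using this
  have hslope : Filter.Tendsto (slope a T) (nhdsWithin T {T}ᶜ) (nhds (-(p₁ * a T))) :=
    hasDerivAt_iff_tendsto_slope.mp hd
  have hslope' : Filter.Tendsto (slope a T) (nhdsWithin T (Set.Iio T)) (nhds (-(p₁ * a T))) :=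
    hslope.mono_left (nhdsWithin_mono T (fun x hx => ne_of_lt hx))
  rcases abs_eq (le_of_lt ha) |>.mp habs with hpos | hneg
  · -- a T = a_max, derivative negative, but a increases to a_max from below
    have hdneg : -(p₁ * a T) < 0 := by rw [hpos]; nlinarith
    have ev1 : ∀ᶠ t in nhdsWithin T (Set.Iio T), slope a T t < 0 :=
      hslope'.eventually_lt_const hdneg
    obtain ⟨t, h1, h2⟩ := (ev1.and hevIoo).exists
    have hden : t - T < 0 := by linarith [h2.2]
    have : (a t - a T) / (t - T) < 0 := by rwa [slope_def_field] at h1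
    have hnum : 0 < a t - a T := by
      rcases div_neg_iff.mp this with ⟨h, _⟩ | ⟨_, h⟩
      · exact h
      · linarith
    have := hnotS t h2.1.le h2.2
    rw [abs_lt] at this
    rw [hpos] at hnum
    linarith
  · have hdpos : 0 < -(p₁ * a T) := by rw [hneg]; nlinarith
    have ev1 : ∀ᶠ t in nhdsWithin T (Set.Iio T), 0 < slope a T t :=
      hslope'.eventually_const_lt hdpos
    obtain ⟨t, h1, h2⟩ := (ev1.and hevIoo).exists
    have hden : t - T < 0 := by linarith [h2.2]
    have : 0 < (a t - a T) / (t - T) := by rwa [slope_def_field] at h1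
    have hnum : a t - a T < 0 := by
      rcases div_pos_iff.mp this with ⟨_, h⟩ | ⟨h, _⟩
      · linarith
      · exact h
    have := hnotS t h2.1.le h2.2
    rw [abs_lt] at this
    rw [hneg] at hnum
    linarith
end

section
/- If σ : [0,∞) → ℝ satisfies σ'(t) = -K₁·σ(t) with K₁ > 0, and r : [0,∞) → ℝ satisfies r'(t) = -v·cos(σ(t)) with v > 0, r(0) > 0, and |σ(0)| < π/2, then there exists a finite time t* > 0 with r(t*) = 0 (interception occurs in finite time). -/
theorem finite_time_interception (K₁ v : ℝ) (hK : 0 < K₁) (hv : 0 < v)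
    (σ r : ℝ → ℝ)
    (hσ : ∀ t ≥ (0:ℝ), HasDerivAt σ (-K₁ * σ t) t)
    (hr : ∀ t ≥ (0:ℝ), HasDerivAt r (-v * Real.cos (σ t)) t)
    (hσ0 : |σ 0| < Real.pi / 2) (hr0 : 0 < r 0) :
    ∃ tstar ∈ Set.Ioi (0:ℝ), r tstar = 0 := by
  have hπ := Real.pi_pos
  -- σ t = σ 0 * exp (-K₁ t) for t ≥ 0
  have hσeq : ∀ t ≥ (0:ℝ), σ t = σ 0 * Real.exp (-K₁ * t) := by
    intro t ht
    set g : ℝ → ℝ := fun x => σ x * Real.exp (K₁ * x) with hg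
    have hg' : ∀ x ∈ Set.Ico (0:ℝ) t, HasDerivWithinAt g 0 (Set.Ici x) x := by
      intro x hx
      have h1 : HasDerivAt g (-K₁ * σ x * Real.exp (K₁ * x)
          + σ x * (Real.exp (K₁ * x) * K₁)) x := by
        have he : HasDerivAt (fun y => Real.exp (K₁ * y)) (Real.exp (K₁ * x) * K₁) x := by
          simpa using ((hasDerivAt_id x).const_mul K₁).exp
        exact (hσ x hx.1).mul he
      have : (-K₁ * σ x * Real.exp (K₁ * x) + σ x * (Real.exp (K₁ * x) * K₁)) = 0 := by ring
      rw [this] at h1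
      exact h1.hasDerivWithinAt
    have hgc : ContinuousOn g (Set.Icc 0 t) := by
      intro x hx
      exact (((hσ x hx.1).continuousAt.mul
        (Real.continuous_exp.comp (continuous_const.mul continuous_id)).continuousAt)).continuousWithinAt
    have := constant_of_has_deriv_right_zero hgc hg' t (by constructor <;> simp [ht])
    have hgt : σ t * Real.exp (K₁ * t) = σ 0 := by simpa [hg] using this
    have : σ t = σ 0 / Real.exp (K₁ * t) := by
      field_simp [Real.exp_ne_zero] at hgt ⊢; linarith [hgt]
    rw [this, neg_mul, Real.exp_neg]
    ring
  have habs : ∀ t ≥ (0:ℝ), |σ t| ≤ |σ 0| := by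
    intro t ht
    rw [hσeq t ht, abs_mul, abs_of_pos (Real.exp_pos _)]
    nlinarith [Real.exp_le_one_iff.mpr (by nlinarith : -K₁ * t ≤ 0), abs_nonneg (σ 0),
      Real.exp_pos (-K₁ * t)]
  set c : ℝ := Real.cos (|σ 0|) with hc
  have hcpos : 0 < c := Real.cos_pos_of_mem_Ioo ⟨by linarith [abs_nonneg (σ 0), hπ], hσ0⟩
  have hcos : ∀ t ≥ (0:ℝ), c ≤ Real.cos (σ t) := by
    intro t ht
    rw [← Real.cos_abs (σ t)]
    exact Real.cos_le_cos_of_nonneg_of_le_pi (abs_nonneg _) (by linarith) (habs t ht)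
  -- r t ≤ r 0 - v * c * t
  have hkey : ∀ t ≥ (0:ℝ), v * c * t ≤ r 0 - r t := by
    intro t ht
    have := Convex.mul_sub_le_image_sub_of_le_deriv (convex_Ici (0:ℝ))
      (f := fun x => -r x) (C := v * c)
      (fun x hx => ((hr x hx).neg).continuousAt.continuousWithinAt)
      (fun x hx => by
        have hx0 : (0:ℝ) ≤ x := le_of_lt (by simpa using hx)
        exact ((hr x hx0).neg.differentiableAt).differentiableWithinAt)
      (fun x hx => by
        have hx0 : (0:ℝ) ≤ x := le_of_lt (by simpa using hx)
        have hd : HasDerivAt (fun x => -r x) (v * Real.cos (σ x)) x := by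
          have := (hr x hx0).neg; exact this.congr_deriv (by ring)
        rw [hd.deriv]
        have := hcos x hx0
        nlinarith)
      0 Set.self_mem_Ici t (Set.mem_Ici.mpr ht)
    ring_nf at this ⊢
    first | linarith | linarith [this ht]
  set T : ℝ := r 0 / (v * c) with hT
  have hTpos : 0 < T := div_pos hr0 (by positivity)
  have hrT : r T ≤ 0 := by
    have := hkey T (le_of_lt hTpos)
    have hvc : v * c * T = r 0 := by rw [hT]; field_simp [hv.ne', hcpos.ne']
    linarith
  -- IVT on [0, T]
  have hcont : ContinuousOn r (Set.Icc 0 T) := fun x hx =>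
    (hr x hx.1).continuousAt.continuousWithinAt
  have h0 : (0:ℝ) ∈ Set.Icc (r T) (r 0) := ⟨hrT, le_of_lt hr0⟩
  obtain ⟨t, htmem, htval⟩ := intermediate_value_Icc' (le_of_lt hTpos) hcont h0
  refine ⟨t, ?_, htval⟩
  rcases lt_or_eq_of_le htmem.1 with h | h
  · exact h
  · exfalso; rw [← h] at htval; linarith
end
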